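/- (Conditional upper-bound corollary.) Assume 1 ≥ b_1 ≥ … ≥ b_m ≥ 0 and let X : 𝓛^n → ℝ be fibrewise supermodular. Then for every 0 ≤ k < n, every prefix λ = (λ_1,…,λ_k) ∈ 𝓛^k, and every Q ∈ M_n(b) with Q(cyl(λ)) > 0: (1/Q(cyl(λ))) Σ_{ω∈cyl(λ)} X(ω)Q(ω) ≤ Σ_{(τ_{k+1},…,τ_n)∈𝓛^{n−k}} q*(τ_{k+1})⋯q*(τ_n)·X(λ_1,…,λ_k,τ_{k+1},…,τ_n), where cyl(λ) = {ω ∈ 𝓛^n : ω_j = λ_j for 1 ≤ j ≤ k} and Q(cyl(λ)) = Σ_{ω∈cyl(λ)} Q(ω). That is, the conditional expectation of X at every node under any measure in M_n(b) is bounded above by its conditional expectation under the product measure (q*)^{⊗n}. -/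
import Mathlib


noncomputable section

open Finset

/-- `ℓ_i` : indicator of `i ∈ S`. -/
def ell {m : ℕ} (i : Fin m) (S : Finset (Fin m)) : ℝ := if i ∈ S then 1 else 0

/-- `μ_j = {1,…,j}` (the first `j` elements of `Fin m`). -/
def mu (m j : ℕ) : Finset (Fin m) := Finset.univ.filter fun i => (i : ℕ) < j

/-- paper `b_j` for `j = 0,…,m`, with `b_0 = 1` (and `0` beyond `m`). -/
def bpaper {m : ℕ} (b : Fin m → ℝ) (j : ℕ) : ℝ :=
  if j = 0 then 1 else if h : j - 1 < m then b ⟨j - 1, h⟩ else 0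

/-- the upper supermodular vertex measure `q*`:
`q*(μ_j) = b_j − b_{j+1}` for `0 ≤ j ≤ m−1`, `q*(μ_m) = b_m`, and `q* = 0` elsewhere. -/
def qStar {m : ℕ} (b : Fin m → ℝ) (S : Finset (Fin m)) : ℝ :=
  ∑ j ∈ Finset.range (m + 1), if S = mu m j then bpaper b j - bpaper b (j + 1) else 0

/-- the lower supermodular vertex measure `q_*`:
`q_*(∅) = 1 − Σᵢ bᵢ`, `q_*({i}) = bᵢ`, and `q_* = 0` elsewhere. -/
def qLow {m : ℕ} (b : Fin m → ℝ) (S : Finset (Fin m)) : ℝ :=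
  if S = ∅ then 1 - ∑ i, b i else ∑ i : Fin m, if S = {i} then b i else 0

/-- membership in `M_1(b)`: a probability function with `E_x(ℓ_i) = b_i` for all `i`. -/
def MemM1 {m : ℕ} (b : Fin m → ℝ) (x : Finset (Fin m) → ℝ) : Prop :=
  (∀ S, 0 ≤ x S) ∧ (∑ S, x S = 1) ∧ (∀ i, ∑ S, ell i S * x S = b i)

/-- membership in `M_n(b)`: a probability function on `𝓛^n` satisfying, for every step `k`,
every prefix `λ` and every `i`, the conditional moment condition. -/
def MemMn {m n : ℕ} (b : Fin m → ℝ) (x : (Fin n → Finset (Fin m)) → ℝ) : Prop :=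
  (∀ ω, 0 ≤ x ω) ∧ (∑ ω, x ω = 1) ∧
  (∀ (k : Fin n) (lam : Fin n → Finset (Fin m)) (i : Fin m),
    (∑ ω, if ∀ j : Fin n, j < k → ω j = lam j then ell i (ω k) * x ω else 0) =
      b i * ∑ ω, if ∀ j : Fin n, j < k → ω j = lam j then x ω else 0)

/-- supermodular function on `𝓛`. -/
def Supermod {m : ℕ} (f : Finset (Fin m) → ℝ) : Prop :=
  ∀ S T, f S + f T ≤ f (S ∪ T) + f (S ∩ T)

/-- fibrewise supermodular function on `𝓛^n`. -/
def FibSupermod {m n : ℕ} (f : (Fin n → Finset (Fin m)) → ℝ) : Prop :=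
  ∀ (k : Fin n) (lam : Fin n → Finset (Fin m)),
    Supermod fun S => f (Function.update lam k S)

/-- the product measure `q^{⊗n}`. -/
def prodM {m n : ℕ} (q : Finset (Fin m) → ℝ) (ω : Fin n → Finset (Fin m)) : ℝ :=
  ∏ k, q (ω k)

section Helpers

variable {m : ℕ}

lemma mem_mu {j : ℕ} {i : Fin m} : i ∈ mu m j ↔ (i : ℕ) < j := by
  simp [mu]

lemma mu_zero : mu m 0 = ∅ := by
  ext i; simp [mem_mu]

lemma bpaper_succ_le (b : Fin m → ℝ) (hmono : ∀ i j : Fin m, i ≤ j → b j ≤ b i)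
    (hb1 : ∀ i, b i ≤ 1) (hb0 : ∀ i, 0 ≤ b i) (j : ℕ) :
    bpaper b (j + 1) ≤ bpaper b j := by
  rcases j with _ | t
  · simp only [bpaper]
    norm_num
    split
    · exact hb1 _
    · norm_num
  · simp only [bpaper]
    norm_num
    by_cases h1 : t + 1 < m
    · have h0 : t < m := by omega
      rw [dif_pos h1, dif_pos h0]
      exact hmono ⟨t, h0⟩ ⟨t+1, h1⟩ (by simp [Fin.le_def])
    · rw [dif_neg h1]
      split
      · exact hb0 _
      · exact le_refl 0

end Helpers

section Helpers2
variable {m : ℕ}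

lemma qStar_nonneg (b : Fin m → ℝ) (hmono : ∀ i j : Fin m, i ≤ j → b j ≤ b i)
    (hb1 : ∀ i, b i ≤ 1) (hb0 : ∀ i, 0 ≤ b i) (S : Finset (Fin m)) :
    0 ≤ qStar b S := by
  refine Finset.sum_nonneg fun j _ => ?_
  split
  · exact sub_nonneg.2 (bpaper_succ_le b hmono hb1 hb0 j)
  · exact le_refl 0

lemma supermod_bound (f : Finset (Fin m) → ℝ) (hf : Supermod f) :
    ∀ S : Finset (Fin m), f S ≤ f ∅ + ∑ i ∈ S, (f (mu m ((i:ℕ)+1)) - f (mu m (i:ℕ))) := by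
  intro S
  induction S using Finset.strongInduction with
  | _ S ih =>
    rcases S.eq_empty_or_nonempty with rfl | hS
    · simp
    · set i := S.max' hS with hidef
      have hiS : i ∈ S := S.max'_mem hS
      have hmax : ∀ x ∈ S, x ≤ i := fun x hx => S.le_max' x hx
      have hunion : S ∪ mu m (i:ℕ) = mu m ((i:ℕ)+1) := by
        ext x
        simp only [Finset.mem_union, mem_mu, Nat.lt_succ_iff]
        constructor
        · rintro (hx | hx)
          · exact hmax x hx
          · exact hx.le
        · intro hx
          rcases lt_or_eq_of_le hx with h | h
          · exact Or.inr h
          · exact Or.inl (by rwa [show x = i from Fin.ext h])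
      have hinter : S ∩ mu m (i:ℕ) = S.erase i := by
        ext x
        simp only [Finset.mem_inter, mem_mu, Finset.mem_erase]
        constructor
        · rintro ⟨hx, hlt⟩
          exact ⟨fun h => absurd (congrArg Fin.val h) (Nat.ne_of_lt hlt), hx⟩
        · rintro ⟨hne, hx⟩
          refine ⟨hx, lt_of_le_of_ne (hmax x hx) ?_⟩
          exact fun h => hne (Fin.ext h)
      have h1 := hf S (mu m (i:ℕ))
      rw [hunion, hinter] at h1
      have h2 := ih (S.erase i) (Finset.erase_ssubset hiS)
      have h3 : ∑ x ∈ S, (f (mu m ((x:ℕ)+1)) - f (mu m (x:ℕ)))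
          = (f (mu m ((i:ℕ)+1)) - f (mu m (i:ℕ)))
            + ∑ x ∈ S.erase i, (f (mu m ((x:ℕ)+1)) - f (mu m (x:ℕ))) :=
        (Finset.add_sum_erase S _ hiS).symm
      rw [h3]
      linarith

end Helpers2

section OneD
variable {m : ℕ}

lemma qStar_expectation (b : Fin m → ℝ) (f : Finset (Fin m) → ℝ) :
    ∑ S, qStar b S * f S
      = ∑ j ∈ Finset.range (m+1), (bpaper b j - bpaper b (j+1)) * f (mu m j) := by
  unfold qStar
  calc ∑ S : Finset (Fin m), (∑ j ∈ Finset.range (m+1),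
          if S = mu m j then bpaper b j - bpaper b (j+1) else 0) * f S
      = ∑ S : Finset (Fin m), ∑ j ∈ Finset.range (m+1),
          (if S = mu m j then (bpaper b j - bpaper b (j+1)) * f S else 0) := by
        refine Finset.sum_congr rfl fun S _ => ?_
        rw [Finset.sum_mul]
        exact Finset.sum_congr rfl fun j _ => by rw [ite_mul, zero_mul]
    _ = ∑ j ∈ Finset.range (m+1), ∑ S : Finset (Fin m),
          (if S = mu m j then (bpaper b j - bpaper b (j+1)) * f S else 0) := Finset.sum_comm
    _ = ∑ j ∈ Finset.range (m+1), (bpaper b j - bpaper b (j+1)) * f (mu m j) := by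
        refine Finset.sum_congr rfl fun j _ => ?_
        rw [Finset.sum_ite_eq' Finset.univ (mu m j)
          (fun S => (bpaper b j - bpaper b (j+1)) * f S), if_pos (Finset.mem_univ _)]

lemma abel (b : Fin m → ℝ) (f : Finset (Fin m) → ℝ) :
    ∑ j ∈ Finset.range (m+1), (bpaper b j - bpaper b (j+1)) * f (mu m j)
      = f ∅ + ∑ i : Fin m, b i * (f (mu m ((i:ℕ)+1)) - f (mu m (i:ℕ))) := by
  have hsplit : ∀ j ∈ Finset.range (m+1), (bpaper b j - bpaper b (j+1)) * f (mu m j)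
      = bpaper b j * f (mu m j) - bpaper b (j+1) * f (mu m j) := by
    intro j _; ring
  rw [Finset.sum_congr rfl hsplit, Finset.sum_sub_distrib,
    Finset.sum_range_succ' (fun j => bpaper b j * f (mu m j)) m,
    Finset.sum_range_succ (fun j => bpaper b (j+1) * f (mu m j)) m]
  have h3 : bpaper b (m+1) = 0 := by simp [bpaper]
  have h0 : bpaper b 0 = 1 := rfl
  rw [h3, h0, zero_mul, add_zero, one_mul, mu_zero]
  have hfin : ∑ i : Fin m, b i * (f (mu m ((i:ℕ)+1)) - f (mu m (i:ℕ)))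
      = ∑ j ∈ Finset.range m, bpaper b (j+1) * (f (mu m (j+1)) - f (mu m j)) := by
    rw [← Fin.sum_univ_eq_sum_range (fun j => bpaper b (j+1) * (f (mu m (j+1)) - f (mu m j))) m]
    refine Finset.sum_congr rfl fun i _ => ?_
    have : bpaper b ((i:ℕ)+1) = b i := by
      simp only [bpaper, Nat.add_sub_cancel, Nat.succ_ne_zero, if_false]
      rw [dif_pos i.isLt]
    rw [this]
  rw [hfin]
  have : ∑ j ∈ Finset.range m, bpaper b (j+1) * (f (mu m (j+1)) - f (mu m j))
      = (∑ j ∈ Finset.range m, bpaper b (j+1) * f (mu m (j+1)))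
        - ∑ j ∈ Finset.range m, bpaper b (j+1) * f (mu m j) := by
    rw [← Finset.sum_sub_distrib]
    exact Finset.sum_congr rfl fun j _ => by ring
  rw [this]
  ring

lemma ell_sum (S : Finset (Fin m)) (g : Fin m → ℝ) :
    ∑ i ∈ S, g i = ∑ i : Fin m, ell i S * g i := by
  calc ∑ i ∈ S, g i = ∑ i ∈ Finset.univ ∩ S, g i := by rw [Finset.univ_inter]
    _ = ∑ i : Fin m, (if i ∈ S then g i else 0) := (Finset.sum_ite_mem _ _ _).symm
    _ = ∑ i : Fin m, ell i S * g i := Finset.sum_congr rfl fun i _ => by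
        simp [ell, ite_mul]

lemma oneD (b : Fin m → ℝ)
    (x : Finset (Fin m) → ℝ) (hx : MemM1 b x)
    (f : Finset (Fin m) → ℝ) (hf : Supermod f) :
    ∑ S, x S * f S ≤ ∑ S, qStar b S * f S := by
  obtain ⟨hx0, hx1, hxm⟩ := hx
  set c : Fin m → ℝ := fun i => f (mu m ((i:ℕ)+1)) - f (mu m (i:ℕ)) with hc
  have step1 : ∑ S, x S * f S ≤ ∑ S, x S * (f ∅ + ∑ i ∈ S, c i) :=
    Finset.sum_le_sum fun S _ => mul_le_mul_of_nonneg_left (supermod_bound f hf S) (hx0 S)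
  have step2 : ∑ S, x S * (f ∅ + ∑ i ∈ S, c i) = f ∅ + ∑ i : Fin m, b i * c i := by
    have e1 : ∀ S, x S * (f ∅ + ∑ i ∈ S, c i)
        = x S * f ∅ + ∑ i : Fin m, (ell i S * x S) * c i := by
      intro S
      rw [ell_sum S c, mul_add, Finset.mul_sum]
      congr 1
      exact Finset.sum_congr rfl fun i _ => by ring
    rw [Finset.sum_congr rfl (fun S _ => e1 S), Finset.sum_add_distrib, ← Finset.sum_mul,
      hx1, one_mul, Finset.sum_comm]
    congr 1
    refine Finset.sum_congr rfl fun i _ => ?_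
    rw [← Finset.sum_mul, hxm i]
  rw [qStar_expectation, abel]
  calc ∑ S, x S * f S ≤ f ∅ + ∑ i : Fin m, b i * c i := by rw [← step2]; exact step1
    _ = f ∅ + ∑ i : Fin m, b i * (f (mu m ((i:ℕ)+1)) - f (mu m (i:ℕ))) := rfl
end OneD

section NDim
variable {m n : ℕ}

lemma split_cyl (k : ℕ) (hk : k < n) (lam : Fin n → Finset (Fin m))
    (g : (Fin n → Finset (Fin m)) → ℝ) :
    (∑ ω, if ∀ j : Fin n, (j:ℕ) < k → ω j = lam j then g ω else 0)
    = ∑ S : Finset (Fin m), ∑ ω,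
        if ∀ j : Fin n, (j:ℕ) < k + 1 → ω j = Function.update lam ⟨k,hk⟩ S j then g ω else 0 := by
  rw [Finset.sum_comm]
  refine Finset.sum_congr rfl fun ω _ => ?_
  symm
  have key : ∀ S : Finset (Fin m),
      (∀ j : Fin n, (j:ℕ) < k + 1 → ω j = Function.update lam ⟨k,hk⟩ S j)
      ↔ ((∀ j : Fin n, (j:ℕ) < k → ω j = lam j) ∧ S = ω ⟨k,hk⟩) := by
    intro S
    constructor
    · intro h
      refine ⟨fun j hj => ?_, ?_⟩
      · rw [h j (by omega), Function.update_of_ne]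
        exact fun he => by simp [Fin.ext_iff] at he; omega
      · exact ((h ⟨k,hk⟩ (Nat.lt_succ_self k)).trans (Function.update_self _ _ _)).symm
    · rintro ⟨h1, rfl⟩
      intro j hj
      rcases Nat.lt_or_ge (j:ℕ) k with h | h
      · rw [h1 j h, Function.update_of_ne]
        exact fun he => by simp [Fin.ext_iff] at he; omega
      · have hje : j = ⟨k,hk⟩ := Fin.ext (show (j:ℕ) = k by omega)
        rw [hje, Function.update_self]
  calc (∑ S : Finset (Fin m),
        if ∀ j : Fin n, (j:ℕ) < k + 1 → ω j = Function.update lam ⟨k,hk⟩ S j then g ω else 0)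
      = ∑ S : Finset (Fin m),
        if (∀ j : Fin n, (j:ℕ) < k → ω j = lam j) ∧ S = ω ⟨k,hk⟩ then g ω else 0 :=
        Finset.sum_congr rfl fun S _ => if_congr (key S) rfl rfl
    _ = if ∀ j : Fin n, (j:ℕ) < k → ω j = lam j then g ω else 0 := by
        by_cases h : ∀ j : Fin n, (j:ℕ) < k → ω j = lam j
        · rw [if_pos h]
          have : ∀ S : Finset (Fin m),
              (if (∀ j : Fin n, (j:ℕ) < k → ω j = lam j) ∧ S = ω ⟨k,hk⟩ then g ω else 0)
              = (if S = ω ⟨k,hk⟩ then g ω else 0) :=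
            fun S => if_congr (and_iff_right h) rfl rfl
          rw [Finset.sum_congr rfl (fun S _ => this S),
            Finset.sum_ite_eq' Finset.univ (ω ⟨k,hk⟩) (fun _ => g ω), if_pos (Finset.mem_univ _)]
        · rw [if_neg h, Finset.sum_eq_zero]
          exact fun S _ => if_neg fun hc => h hc.1

lemma update_mem_cyl {k : ℕ} {hk : k < n} {lam : Fin n → Finset (Fin m)} {S T : Finset (Fin m)}
    {ω : Fin n → Finset (Fin m)}
    (hω : ∀ j : Fin n, (j:ℕ) < k + 1 → ω j = Function.update lam ⟨k,hk⟩ S j) :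
    ∀ j : Fin n, (j:ℕ) < k + 1 → Function.update ω ⟨k,hk⟩ T j = Function.update lam ⟨k,hk⟩ T j := by
  intro j hj
  by_cases hje : j = ⟨k,hk⟩
  · rw [hje, Function.update_self, Function.update_self]
  · rw [Function.update_of_ne hje, Function.update_of_ne hje, hω j hj,
      Function.update_of_ne hje]

lemma cyl_val {k : ℕ} {hk : k < n} {lam : Fin n → Finset (Fin m)} {S : Finset (Fin m)}
    {ω : Fin n → Finset (Fin m)}
    (hω : ∀ j : Fin n, (j:ℕ) < k + 1 → ω j = Function.update lam ⟨k,hk⟩ S j) :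
    ω ⟨k,hk⟩ = S :=
  (hω ⟨k,hk⟩ (Nat.lt_succ_self k)).trans (Function.update_self _ _ _)

lemma reindex_cyl (k : ℕ) (hk : k < n) (lam : Fin n → Finset (Fin m)) (S T : Finset (Fin m))
    (g : (Fin n → Finset (Fin m)) → ℝ) :
    (∑ ω, if ∀ j : Fin n, (j:ℕ) < k + 1 → ω j = Function.update lam ⟨k,hk⟩ S j then g ω else 0)
    = ∑ ω, if ∀ j : Fin n, (j:ℕ) < k + 1 → ω j = Function.update lam ⟨k,hk⟩ T j
        then g (Function.update ω ⟨k,hk⟩ S) else 0 := by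
  rw [← Finset.sum_filter, ← Finset.sum_filter]
  refine Finset.sum_bij' (fun ω _ => Function.update ω ⟨k,hk⟩ T)
    (fun ω _ => Function.update ω ⟨k,hk⟩ S) ?_ ?_ ?_ ?_ ?_
  · intro ω hω
    rw [Finset.mem_filter] at hω ⊢
    exact ⟨Finset.mem_univ _, update_mem_cyl hω.2⟩
  · intro ω hω
    rw [Finset.mem_filter] at hω ⊢
    exact ⟨Finset.mem_univ _, update_mem_cyl hω.2⟩
  · intro ω hω
    rw [Finset.mem_filter] at hω
    show Function.update (Function.update ω ⟨k,hk⟩ T) ⟨k,hk⟩ S = ω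
    rw [Function.update_idem, ← cyl_val hω.2, Function.update_eq_self]
  · intro ω hω
    rw [Finset.mem_filter] at hω
    show Function.update (Function.update ω ⟨k,hk⟩ S) ⟨k,hk⟩ T = ω
    rw [Function.update_idem, ← cyl_val hω.2, Function.update_eq_self]
  · intro ω hω
    rw [Finset.mem_filter] at hω
    show g ω = g (Function.update (Function.update ω ⟨k,hk⟩ T) ⟨k,hk⟩ S)
    rw [Function.update_idem, ← cyl_val hω.2, Function.update_eq_self]

lemma W_update (b : Fin m → ℝ) (k : ℕ) (hk : k < n) (ω : Fin n → Finset (Fin m))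
    (S : Finset (Fin m)) :
    (∏ j : Fin n, if k + 1 ≤ (j:ℕ) then qStar b (Function.update ω ⟨k,hk⟩ S j) else 1)
    = ∏ j : Fin n, if k + 1 ≤ (j:ℕ) then qStar b (ω j) else 1 := by
  refine Finset.prod_congr rfl fun j _ => ?_
  by_cases h : k + 1 ≤ (j:ℕ)
  · rw [if_pos h, if_pos h, Function.update_of_ne]
    exact fun he => by simp [Fin.ext_iff] at he; omega
  · rw [if_neg h, if_neg h]

lemma prod_factor (b : Fin m → ℝ) (k : ℕ) (hk : k < n) (ω : Fin n → Finset (Fin m)) :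
    (∏ j : Fin n, if k ≤ (j:ℕ) then qStar b (ω j) else 1)
    = qStar b (ω ⟨k,hk⟩) * ∏ j : Fin n, if k + 1 ≤ (j:ℕ) then qStar b (ω j) else 1 := by
  rw [← Finset.mul_prod_erase Finset.univ (fun j : Fin n => if k ≤ (j:ℕ) then qStar b (ω j) else 1)
      (Finset.mem_univ (⟨k,hk⟩ : Fin n)),
    ← Finset.mul_prod_erase Finset.univ
      (fun j : Fin n => if k + 1 ≤ (j:ℕ) then qStar b (ω j) else 1)
      (Finset.mem_univ (⟨k,hk⟩ : Fin n))]
  have h1 : (if k ≤ ((⟨k,hk⟩ : Fin n):ℕ) then qStar b (ω ⟨k,hk⟩) else 1)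
      = qStar b (ω ⟨k,hk⟩) := if_pos (le_refl k)
  have h2 : (if k + 1 ≤ ((⟨k,hk⟩ : Fin n):ℕ) then qStar b (ω ⟨k,hk⟩) else 1) = 1 :=
    if_neg (Nat.not_succ_le_self k)
  rw [h1, h2, one_mul]
  congr 1
  refine Finset.prod_congr rfl fun j hj => ?_
  have hje : j ≠ ⟨k,hk⟩ := (Finset.mem_erase.1 hj).1
  have hv : (j:ℕ) ≠ k := fun h => hje (Fin.ext h)
  by_cases h : k + 1 ≤ (j:ℕ)
  · rw [if_pos (by omega), if_pos h]
  · rw [if_neg (by omega), if_neg h]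

end NDim

section Main
variable {m n : ℕ}

lemma aux_main (b : Fin m → ℝ)
    (hmono : ∀ i j : Fin m, i ≤ j → b j ≤ b i)
    (hb1 : ∀ i, b i ≤ 1) (hb0 : ∀ i, 0 ≤ b i)
    (X : (Fin n → Finset (Fin m)) → ℝ) (hX : FibSupermod X) :
    ∀ (d k : ℕ), k + d = n → ∀ (lam : Fin n → Finset (Fin m))
      (Q : (Fin n → Finset (Fin m)) → ℝ), MemMn b Q →
      0 < (∑ ω, if ∀ j : Fin n, (j:ℕ) < k → ω j = lam j then Q ω else 0) →
      (∑ ω, if ∀ j : Fin n, (j:ℕ) < k → ω j = lam j then X ω * Q ω else 0) /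
        (∑ ω, if ∀ j : Fin n, (j:ℕ) < k → ω j = lam j then Q ω else 0) ≤
      ∑ ω, if ∀ j : Fin n, (j:ℕ) < k → ω j = lam j then
          (∏ j : Fin n, if k ≤ (j:ℕ) then qStar b (ω j) else 1) * X ω else 0 := by
  intro d
  induction d with
  | zero =>
    intro k hkn lam Q hQ hQc
    have hkn' : k = n := by omega
    subst hkn'
    have hcol : ∀ g : (Fin k → Finset (Fin m)) → ℝ,
        (∑ ω, if ∀ j : Fin k, (j:ℕ) < k → ω j = lam j then g ω else 0) = g lam := by
      intro g
      have hiff : ∀ ω : Fin k → Finset (Fin m),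
          (∀ j : Fin k, (j:ℕ) < k → ω j = lam j) ↔ ω = lam :=
        fun ω => ⟨fun h => funext fun j => h j j.isLt, fun h j _ => by rw [h]⟩
      calc (∑ ω, if ∀ j : Fin k, (j:ℕ) < k → ω j = lam j then g ω else 0)
          = ∑ ω, if ω = lam then g ω else 0 :=
            Finset.sum_congr rfl fun ω _ => if_congr (hiff ω) rfl rfl
        _ = g lam := by
            rw [Finset.sum_ite_eq' Finset.univ lam g, if_pos (Finset.mem_univ _)]
    rw [hcol] at hQc
    rw [hcol, hcol, hcol]
    have hprod : (∏ j : Fin k, if k ≤ (j:ℕ) then qStar b (lam j) else 1) = 1 :=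
      Finset.prod_eq_one fun j _ => if_neg (by have := j.isLt; omega)
    rw [hprod, one_mul, mul_div_assoc, div_self (ne_of_gt hQc), mul_one]
  | succ d ih =>
    intro k hkn lam Q hQ hQc
    have hk : k < n := by omega
    set C := ∑ ω, if ∀ j : Fin n, (j:ℕ) < k → ω j = lam j then Q ω else 0 with hCdef
    set c : Finset (Fin m) → ℝ := fun S => ∑ ω,
      if ∀ j : Fin n, (j:ℕ) < k + 1 → ω j = Function.update lam ⟨k,hk⟩ S j then Q ω else 0
      with hcdef
    set N : Finset (Fin m) → ℝ := fun S => ∑ ω,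
      if ∀ j : Fin n, (j:ℕ) < k + 1 → ω j = Function.update lam ⟨k,hk⟩ S j then X ω * Q ω else 0
      with hNdef
    set R : Finset (Fin m) → ℝ := fun S => ∑ ω,
      if ∀ j : Fin n, (j:ℕ) < k + 1 → ω j = Function.update lam ⟨k,hk⟩ S j then
        (∏ j : Fin n, if k + 1 ≤ (j:ℕ) then qStar b (ω j) else 1) * X ω else 0
      with hRdef
    have hCsplit : C = ∑ S : Finset (Fin m), c S := split_cyl k hk lam Q
    have hNsplit : (∑ ω, if ∀ j : Fin n, (j:ℕ) < k → ω j = lam j then X ω * Q ω else 0)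
        = ∑ S : Finset (Fin m), N S := split_cyl k hk lam (fun ω => X ω * Q ω)
    have hRHS : (∑ ω, if ∀ j : Fin n, (j:ℕ) < k → ω j = lam j then
          (∏ j : Fin n, if k ≤ (j:ℕ) then qStar b (ω j) else 1) * X ω else 0)
        = ∑ S : Finset (Fin m), qStar b S * R S := by
      rw [split_cyl k hk lam
        (fun ω => (∏ j : Fin n, if k ≤ (j:ℕ) then qStar b (ω j) else 1) * X ω)]
      refine Finset.sum_congr rfl fun S _ => ?_
      simp only [hRdef]
      rw [Finset.mul_sum]
      refine Finset.sum_congr rfl fun ω _ => ?_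
      by_cases h : ∀ j : Fin n, (j:ℕ) < k + 1 → ω j = Function.update lam ⟨k,hk⟩ S j
      · rw [if_pos h, if_pos h, prod_factor b k hk ω, cyl_val h, mul_assoc]
      · rw [if_neg h, if_neg h, mul_zero]
    have hcnonneg : ∀ S, 0 ≤ c S := fun S => Finset.sum_nonneg fun ω _ => by
      split
      · exact hQ.1 ω
      · exact le_refl 0
    have hRsup : Supermod R := by
      have hre : ∀ T : Finset (Fin m), R T = ∑ ω,
          if ∀ j : Fin n, (j:ℕ) < k + 1 →
              ω j = Function.update lam ⟨k,hk⟩ (∅ : Finset (Fin m)) j then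
            (∏ j : Fin n, if k + 1 ≤ (j:ℕ) then qStar b (ω j) else 1) *
              X (Function.update ω ⟨k,hk⟩ T) else 0 := by
        intro T
        simp only [hRdef]
        rw [reindex_cyl k hk lam T ∅
          (fun ω => (∏ j : Fin n, if k + 1 ≤ (j:ℕ) then qStar b (ω j) else 1) * X ω)]
        refine Finset.sum_congr rfl fun ω _ => ?_
        by_cases h : ∀ j : Fin n, (j:ℕ) < k + 1 →
            ω j = Function.update lam ⟨k,hk⟩ (∅ : Finset (Fin m)) j
        · rw [if_pos h, if_pos h, W_update b k hk ω T]
        · rw [if_neg h, if_neg h]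
      intro A B
      rw [hre A, hre B, hre (A ∪ B), hre (A ∩ B), ← Finset.sum_add_distrib,
        ← Finset.sum_add_distrib]
      refine Finset.sum_le_sum fun ω _ => ?_
      by_cases h : ∀ j : Fin n, (j:ℕ) < k + 1 →
          ω j = Function.update lam ⟨k,hk⟩ (∅ : Finset (Fin m)) j
      · rw [if_pos h, if_pos h, if_pos h, if_pos h, ← mul_add, ← mul_add]
        refine mul_le_mul_of_nonneg_left (hX ⟨k,hk⟩ ω A B) ?_
        exact Finset.prod_nonneg fun j _ => by
          split
          · exact qStar_nonneg b hmono hb1 hb0 _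
          · exact zero_le_one
      · rw [if_neg h, if_neg h, if_neg h, if_neg h, add_zero]
    have hmom : ∀ i : Fin m, ∑ S : Finset (Fin m), ell i S * c S = b i * C := by
      intro i
      have h0 : (∑ ω, if ∀ j : Fin n, (j:ℕ) < k → ω j = lam j then
            ell i (ω ⟨k,hk⟩) * Q ω else 0) = b i * C :=
        hQ.2.2 ⟨k,hk⟩ lam i
      rw [split_cyl k hk lam (fun ω => ell i (ω ⟨k,hk⟩) * Q ω)] at h0
      rw [← h0]
      refine Finset.sum_congr rfl fun S _ => ?_
      simp only [hcdef]
      rw [Finset.mul_sum]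
      refine Finset.sum_congr rfl fun ω _ => ?_
      by_cases h : ∀ j : Fin n, (j:ℕ) < k + 1 → ω j = Function.update lam ⟨k,hk⟩ S j
      · rw [if_pos h, if_pos h, cyl_val h]
      · rw [if_neg h, if_neg h, mul_zero]
    have hx : MemM1 b (fun S => c S / C) := by
      refine ⟨fun S => div_nonneg (hcnonneg S) hQc.le, ?_, fun i => ?_⟩
      · rw [← Finset.sum_div, ← hCsplit, div_self (ne_of_gt hQc)]
      · calc ∑ S : Finset (Fin m), ell i S * (c S / C)
            = (∑ S : Finset (Fin m), ell i S * c S) / C := by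
              rw [Finset.sum_div]
              exact Finset.sum_congr rfl fun S _ => (mul_div_assoc _ _ _).symm
          _ = b i * C / C := by rw [hmom i]
          _ = b i := by rw [mul_div_assoc, div_self (ne_of_gt hQc), mul_one]
    have hNle : ∀ S : Finset (Fin m), N S ≤ c S * R S := by
      intro S
      rcases eq_or_lt_of_le (hcnonneg S) with h | h
      · have hz := (Finset.sum_eq_zero_iff_of_nonneg (fun ω (_ : ω ∈ Finset.univ) => by
          split
          · exact hQ.1 ω
          · exact le_refl 0)).1 h.symm
        have hN0 : N S = 0 := Finset.sum_eq_zero fun ω hω => by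
          by_cases hc : ∀ j : Fin n, (j:ℕ) < k + 1 → ω j = Function.update lam ⟨k,hk⟩ S j
          · have hzz := hz ω hω
            rw [if_pos hc] at hzz
            rw [if_pos hc, hzz, mul_zero]
          · rw [if_neg hc]
        rw [hN0, ← h, zero_mul]
      · have hIH := ih (k + 1) (by omega) (Function.update lam ⟨k,hk⟩ S) Q hQ h
        calc N S = (N S / c S) * c S := (div_mul_cancel₀ (N S) (ne_of_gt h)).symm
          _ ≤ R S * c S := mul_le_mul_of_nonneg_right hIH h.le
          _ = c S * R S := mul_comm _ _
    rw [hNsplit, hRHS]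
    calc (∑ S : Finset (Fin m), N S) / C
        ≤ (∑ S : Finset (Fin m), c S * R S) / C :=
          (div_le_div_iff_of_pos_right hQc).2 (Finset.sum_le_sum fun S _ => hNle S)
      _ = ∑ S : Finset (Fin m), (c S / C) * R S := by
          rw [Finset.sum_div]
          exact Finset.sum_congr rfl fun S _ => by ring
      _ ≤ ∑ S : Finset (Fin m), qStar b S * R S := oneD b (fun S => c S / C) hx R hRsup

end Main

/-- conditional upper bound: at every node, the conditional expectation of a
fibrewise supermodular `X` under any `Q ∈ M_n(b)` is at most its conditional expectation
under the product measure `(q*)^{⊗n}`. -/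
theorem conditional_upper_bound {m n : ℕ} (hm : 0 < m) (hn : 0 < n) (b : Fin m → ℝ)
    (hmono : ∀ i j : Fin m, i ≤ j → b j ≤ b i)
    (hb1 : ∀ i, b i ≤ 1) (hb0 : ∀ i, 0 ≤ b i)
    (X : (Fin n → Finset (Fin m)) → ℝ) (hX : FibSupermod X)
    (k : ℕ) (hk : k < n) (lam : Fin n → Finset (Fin m))
    (Q : (Fin n → Finset (Fin m)) → ℝ) (hQ : MemMn b Q)
    (hQc : 0 < ∑ ω, if ∀ j : Fin n, (j : ℕ) < k → ω j = lam j then Q ω else 0) :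
    (∑ ω, if ∀ j : Fin n, (j : ℕ) < k → ω j = lam j then X ω * Q ω else 0) /
      (∑ ω, if ∀ j : Fin n, (j : ℕ) < k → ω j = lam j then Q ω else 0) ≤
    ∑ ω, if ∀ j : Fin n, (j : ℕ) < k → ω j = lam j then
        (∏ j : Fin n, if k ≤ (j : ℕ) then qStar b (ω j) else 1) * X ω
      else 0 :=
  aux_main b hmono hb1 hb0 X hX (n - k) k (by omega) lam Q hQ hQc
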